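/- Under the BAG construction, the finite-dimensional densities are consistent under marginalization: for a finite L ⊂ D and a location l₀ ∈ D ∖ L, one has p̃(w_L) = ∫ p̃(w_{L ∪ {l₀}}) dw(l₀). In particular this holds both when l₀ ∈ S and when l₀ ∉ S. -/

import Mathlib

open MeasureTheory
open scoped ENNReal Classical

/-- Assemble a full configuration `D → ℝ`: at locations hit by the tuple `l` use the
corresponding entry of `x`, elsewhere use the background configuration `v`. -/
noncomputable def assemble {D : Type*} {n : ℕ} (l : Fin n → D) (x : Fin n → ℝ)
    (v : D → ℝ) : D → ℝ :=
  fun d => if h : ∃ i, l i = d then x h.choose else v d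

/-- Extend a configuration on the reference set `S` to all of `D` (by zero off `S`). -/
noncomputable def extendS {D : Type*} (S : Finset D) (v : ↥S → ℝ) : D → ℝ :=
  fun d => if h : d ∈ S then v ⟨d, h⟩ else 0

/-- Product measure integrating out the reference coordinates in `S ∖ L`: Lebesgue on
coordinates of `S` not covered by the tuple `l`, and a point mass on covered ones
(on which the integrand does not depend). -/
noncomputable def refMeasure {D : Type*} {n : ℕ} (S : Finset D) (l : Fin n → D) :
    Measure (↥S → ℝ) :=
  Measure.pi (fun s => if ∃ i, l i = (s : D) then Measure.dirac 0 else volume)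

/-- The BAG finite-dimensional density (equation (6)) of the realizations `x` at the tuple of
locations `l`: integrate over the reference realizations in `S ∖ L` the mixture over DAG
configurations `z` of (product over non-reference locations of `L` of their conditional
densities `q`) × (reference density `pS`) × (DAG prior `pz`). -/
noncomputable def ptilde {D : Type*} (S : Finset D) (M K : ℕ) (part : D → Fin M)
    (pz : (Fin M → Fin K) → ℝ≥0∞)
    (q : D → Fin K → (D → ℝ) → ℝ≥0∞)
    (pS : (Fin M → Fin K) → (D → ℝ) → ℝ≥0∞)
    {n : ℕ} (l : Fin n → D) (x : Fin n → ℝ) : ℝ≥0∞ :=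
  ∫⁻ v : ↥S → ℝ,
    ∑ z : Fin M → Fin K,
      (∏ i ∈ Finset.univ.filter (fun i : Fin n => l i ∉ S),
        q (l i) (z (part (l i))) (assemble l x (extendS S v))) *
      pS z (assemble l x (extendS S v)) * pz z
  ∂ refMeasure S l

/-!
If `l₀ ∈ S`, adding `l₀` to the tuple replaces the Lebesgue factor of the reference measure at
`l₀` by a point mass and leaves the mixture density unchanged; integrating over `w(l₀)` then just
splits off that coordinate of the original reference integral (Fubini on the product measure).

If `l₀ ∉ S`, the reference measure is unchanged and the mixture acquires the single factor
`q(l₀, ·)`. Every other factor sees only `S` and its own location, hence is constant in `w(l₀)`,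
so after swapping the integrals (Tonelli) the new factor integrates to `1` by properness.
-/

open Function

theorem MeasureTheory.Measure.pi_update_eq_map {ι α : Type*} [Fintype ι] [DecidableEq ι]
    [MeasurableSpace α] (μ : ι → Measure α) [∀ j, SigmaFinite (μ j)] (i : ι)
    [IsProbabilityMeasure (μ i)] (ν : Measure α) [SigmaFinite ν] :
    Measure.pi (update μ i ν) = ((Measure.pi μ).prod ν).map (fun p => update p.1 i p.2) := by
  have : ∀ j, SigmaFinite (update μ i ν j) := fun j => by
    rcases eq_or_ne j i with rfl | h
    · rw [update_self]; infer_instance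
    · rw [update_of_ne h]; infer_instance
  refine Measure.pi_eq fun A hA => ?_
  have hpre : (fun p : (ι → α) × α => update p.1 i p.2) ⁻¹' Set.univ.pi A
      = Set.univ.pi (update A i Set.univ) ×ˢ A i := by
    ext p
    simp only [Set.mem_preimage, Set.mem_univ_pi, Set.mem_prod, update_apply]
    refine ⟨fun h => ⟨fun j => ?_, by simpa using h i⟩, fun h j => ?_⟩
    · have := h j
      split_ifs at this ⊢ <;> trivial
    · have := h.1 j
      split_ifs at this ⊢ with hj
      · exact hj ▸ h.2
      · exact this
  rw [Measure.map_apply measurable_update' (.univ_pi hA), hpre, Measure.prod_prod,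
    Measure.pi_pi, Fintype.prod_eq_mul_prod_compl i, Fintype.prod_eq_mul_prod_compl i]
  simp only [update_self, measure_univ, one_mul, mul_comm]
  refine congrArg _ (Finset.prod_congr rfl fun j hj => ?_)
  rw [update_of_ne (by simpa using hj), update_of_ne (by simpa using hj)]

theorem MeasureTheory.lintegral_pi_update {ι α : Type*} [Fintype ι] [DecidableEq ι]
    [MeasurableSpace α] (μ : ι → Measure α) [∀ j, SigmaFinite (μ j)] (i : ι)
    [IsProbabilityMeasure (μ i)] (ν : Measure α) [SigmaFinite ν]
    {f : (ι → α) → ℝ≥0∞} (hf : Measurable f) :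
    ∫⁻ y, f y ∂Measure.pi (update μ i ν) = ∫⁻ t, ∫⁻ y, f (update y i t) ∂Measure.pi μ ∂ν := by
  rw [Measure.pi_update_eq_map, lintegral_map hf measurable_update']
  exact lintegral_prod_symm _ (hf.comp measurable_update').aemeasurable

section BAG

variable {D : Type*} {n : ℕ}

lemma assemble_apply_of_injective {l : Fin n → D} (hl : Injective l) (x : Fin n → ℝ)
    (v : D → ℝ) (i : Fin n) : assemble l x v (l i) = x i := by
  have h : ∃ j, l j = l i := ⟨i, rfl⟩
  rw [assemble, dif_pos h, hl h.choose_spec]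

lemma assemble_apply_of_forall_ne {l : Fin n → D} {d : D} (h : ∀ i, l i ≠ d)
    (x : Fin n → ℝ) (v : D → ℝ) : assemble l x v d = v d :=
  dif_neg (not_exists.mpr h)

lemma assemble_snoc [DecidableEq D] {l : Fin n → D} (hl : Injective l) {l₀ : D}
    (hl₀ : ∀ i, l i ≠ l₀) (x : Fin n → ℝ) (t : ℝ) (v : D → ℝ) :
    assemble (Fin.snoc l l₀) (Fin.snoc x t) v = update (assemble l x v) l₀ t := by
  have hinj : Injective (Fin.snoc l l₀ : Fin (n + 1) → D) :=
    Fin.snoc_injective_of_injective hl (by simpa using hl₀)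
  funext d
  by_cases hd : d = l₀
  · subst hd
    simpa using assemble_apply_of_injective hinj (Fin.snoc x t) v (Fin.last n)
  rw [update_of_ne hd]
  by_cases hr : ∃ i, l i = d
  · obtain ⟨i, rfl⟩ := hr
    simpa [assemble_apply_of_injective hl] using
      assemble_apply_of_injective hinj (Fin.snoc x t) v i.castSucc
  · push Not at hr
    rw [assemble_apply_of_forall_ne hr, assemble_apply_of_forall_ne]
    exact Fin.lastCases (by simpa using Ne.symm hd) (by simpa using hr)

lemma assemble_update [DecidableEq D] {l : Fin n → D} {l₀ : D} (hl₀ : ∀ i, l i ≠ l₀)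
    (x : Fin n → ℝ) (v : D → ℝ) (t : ℝ) :
    assemble l x (update v l₀ t) = update (assemble l x v) l₀ t := by
  funext d
  by_cases hr : ∃ i, l i = d
  · obtain ⟨i, rfl⟩ := hr
    simp only [assemble, dif_pos (⟨i, rfl⟩ : ∃ j, l j = l i), update_of_ne (hl₀ i)]
  · rw [assemble_apply_of_forall_ne (not_exists.mp hr)]
    rcases eq_or_ne d l₀ with rfl | hd
    · simp
    · rw [update_of_ne hd, update_of_ne hd, assemble_apply_of_forall_ne (not_exists.mp hr)]

lemma extendS_update [DecidableEq D] (S : Finset D) (v : S → ℝ) (s₀ : S) (t : ℝ) :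
    extendS S (update v s₀ t) = update (extendS S v) s₀ t := by
  funext d
  by_cases hd : d ∈ S
  · simp [extendS, hd, update_apply, Subtype.ext_iff]
  · have : d ≠ s₀ := fun h => hd (h ▸ s₀.2)
    simp [extendS, hd, update_of_ne this]

lemma measurable_assemble_extendS (S : Finset D) (l : Fin n → D) (x : Fin n → ℝ) :
    Measurable fun v : S → ℝ => assemble l x (extendS S v) := by
  refine measurable_pi_lambda _ fun d => ?_
  by_cases h : ∃ i, l i = d
  · simp only [assemble, dif_pos h, measurable_const]
  by_cases hd : d ∈ S
  · simpa only [assemble, dif_neg h, extendS, dif_pos hd] using measurable_pi_apply _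
  · simp only [assemble, dif_neg h, extendS, dif_neg hd, measurable_const]

noncomputable def refFactor (S : Finset D) (l : Fin n → D) (s : S) : Measure ℝ :=
  if ∃ i, l i = (s : D) then Measure.dirac 0 else volume

instance (S : Finset D) (l : Fin n → D) (s : S) : SigmaFinite (refFactor S l s) := by
  unfold refFactor; split <;> infer_instance

lemma refFactor_snoc_of_notMem {S : Finset D} (l : Fin n → D) {l₀ : D} (hS : l₀ ∉ S) :
    refFactor S (Fin.snoc l l₀) = refFactor S l := by
  funext s
  have : l₀ ≠ s := fun h => hS (h ▸ s.2)
  simp [refFactor, Fin.exists_fin_succ', this]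

lemma refFactor_snoc_self {S : Finset D} (l : Fin n → D) {l₀ : D} (hS : l₀ ∈ S) :
    refFactor S (Fin.snoc l l₀) ⟨l₀, hS⟩ = Measure.dirac 0 :=
  if_pos ⟨Fin.last n, Fin.snoc_last _ _⟩

lemma update_refFactor_snoc [DecidableEq D] {S : Finset D} {l : Fin n → D} {l₀ : D}
    (hS : l₀ ∈ S) (hl₀ : ∀ i, l i ≠ l₀) :
    update (refFactor S (Fin.snoc l l₀)) ⟨l₀, hS⟩ volume = refFactor S l := by
  funext s
  rcases eq_or_ne s ⟨l₀, hS⟩ with rfl | hs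
  · rw [update_self, refFactor, if_neg (not_exists.mpr hl₀)]
  · have : l₀ ≠ s := fun h => hs (Subtype.ext h.symm)
    simp [update_of_ne hs, refFactor, Fin.exists_fin_succ', this]

section Density

variable {M K : ℕ} (S : Finset D) (part : D → Fin M) (pz : (Fin M → Fin K) → ℝ≥0∞)
  (q : D → Fin K → (D → ℝ) → ℝ≥0∞) (pS : (Fin M → Fin K) → (D → ℝ) → ℝ≥0∞)

noncomputable def bagTerm (l : Fin n → D) (z : Fin M → Fin K) (w : D → ℝ) : ℝ≥0∞ :=
  (∏ i ∈ Finset.univ.filter (fun i => l i ∉ S), q (l i) (z (part (l i))) w) * pS z w * pz z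

noncomputable def bagDensity (l : Fin n → D) (w : D → ℝ) : ℝ≥0∞ :=
  ∑ z, bagTerm S part pz q pS l z w

lemma ptilde_eq_lintegral_bagDensity (l : Fin n → D) (x : Fin n → ℝ) :
    ptilde S M K part pz q pS l x
      = ∫⁻ v, bagDensity S part pz q pS l (assemble l x (extendS S v))
          ∂Measure.pi (refFactor S l) :=
  rfl

variable {S part pz q pS}

lemma measurable_bagTerm (hqm : ∀ u h, Measurable (q u h)) (hpSm : ∀ z, Measurable (pS z))
    (l : Fin n → D) (z : Fin M → Fin K) : Measurable (bagTerm S part pz q pS l z) := by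
  unfold bagTerm
  fun_prop

lemma measurable_bagDensity (hqm : ∀ u h, Measurable (q u h)) (hpSm : ∀ z, Measurable (pS z))
    (l : Fin n → D) : Measurable (bagDensity S part pz q pS l) :=
  Finset.measurable_sum _ fun z _ => measurable_bagTerm hqm hpSm l z

lemma bagTerm_snoc_of_mem (l : Fin n → D) {l₀ : D} (hS : l₀ ∈ S) (z : Fin M → Fin K) :
    bagTerm S part pz q pS (Fin.snoc l l₀) z = bagTerm S part pz q pS l z := by
  funext w
  simp [bagTerm, Finset.prod_filter, Fin.prod_univ_castSucc, hS]

lemma bagDensity_snoc_of_mem (l : Fin n → D) {l₀ : D} (hS : l₀ ∈ S) :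
    bagDensity S part pz q pS (Fin.snoc l l₀) = bagDensity S part pz q pS l := by
  funext w
  simp only [bagDensity, bagTerm_snoc_of_mem l hS]

lemma bagTerm_snoc_of_notMem (l : Fin n → D) {l₀ : D} (hS : l₀ ∉ S) (z : Fin M → Fin K)
    (w : D → ℝ) :
    bagTerm S part pz q pS (Fin.snoc l l₀) z w
      = q l₀ (z (part l₀)) w * bagTerm S part pz q pS l z w := by
  simp [bagTerm, Finset.prod_filter, Fin.prod_univ_castSucc, hS, mul_comm, mul_left_comm]

lemma bagTerm_update_of_notMem [DecidableEq D]
    (hqdep : ∀ u h (w w' : D → ℝ), w u = w' u → (∀ s ∈ S, w s = w' s) → q u h w = q u h w')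
    (hpSdep : ∀ z (w w' : D → ℝ), (∀ s ∈ S, w s = w' s) → pS z w = pS z w')
    {l : Fin n → D} {l₀ : D} (hS : l₀ ∉ S) (hl₀ : ∀ i, l i ≠ l₀) (z : Fin M → Fin K)
    (w : D → ℝ) (t : ℝ) :
    bagTerm S part pz q pS l z (update w l₀ t) = bagTerm S part pz q pS l z w := by
  have hw : ∀ s ∈ S, update w l₀ t s = w s := fun s hs =>
    update_of_ne (ne_of_mem_of_not_mem hs hS) _ _
  unfold bagTerm
  rw [hpSdep z _ w hw,
    Finset.prod_congr rfl fun i _ => hqdep _ _ _ _ (update_of_ne (hl₀ i) _ _) hw]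

lemma lintegral_bagDensity_snoc_update [DecidableEq D] (hqm : ∀ u h, Measurable (q u h))
    (hpSm : ∀ z, Measurable (pS z))
    (hqdep : ∀ u h (w w' : D → ℝ), w u = w' u → (∀ s ∈ S, w s = w' s) → q u h w = q u h w')
    (hpSdep : ∀ z (w w' : D → ℝ), (∀ s ∈ S, w s = w' s) → pS z w = pS z w')
    (hqproper : ∀ u h (w : D → ℝ), u ∉ S → (∫⁻ t : ℝ, q u h (update w u t)) = 1)
    {l : Fin n → D} {l₀ : D} (hS : l₀ ∉ S) (hl₀ : ∀ i, l i ≠ l₀) (w : D → ℝ) :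
    ∫⁻ t, bagDensity S part pz q pS (Fin.snoc l l₀) (update w l₀ t)
      = bagDensity S part pz q pS l w := by
  have hm : ∀ z ∈ Finset.univ,
      Measurable fun t => bagTerm S part pz q pS (Fin.snoc l l₀) z (update w l₀ t) :=
    fun z _ => (measurable_bagTerm hqm hpSm _ z).comp (measurable_update w)
  simp only [bagDensity]
  rw [lintegral_finsetSum _ hm]
  refine Finset.sum_congr rfl fun z _ => ?_
  calc ∫⁻ t, bagTerm S part pz q pS (Fin.snoc l l₀) z (update w l₀ t)
      = ∫⁻ t, q l₀ (z (part l₀)) (update w l₀ t) * bagTerm S part pz q pS l z w := by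
        simp_rw [bagTerm_snoc_of_notMem l hS, bagTerm_update_of_notMem hqdep hpSdep hS hl₀]
    _ = bagTerm S part pz q pS l z w := by
        have hq : Measurable fun t => q l₀ (z (part l₀)) (update w l₀ t) :=
          (hqm _ _).comp (measurable_update w)
        rw [lintegral_mul_const _ hq, hqproper _ _ _ hS, one_mul]

end Density

variable {M K : ℕ} {S : Finset D} {part : D → Fin M} {pz : (Fin M → Fin K) → ℝ≥0∞}
  {q : D → Fin K → (D → ℝ) → ℝ≥0∞} {pS : (Fin M → Fin K) → (D → ℝ) → ℝ≥0∞}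

theorem ptilde_marginalization_of_mem [DecidableEq D] (hqm : ∀ u h, Measurable (q u h))
    (hpSm : ∀ z, Measurable (pS z)) {l : Fin n → D} (x : Fin n → ℝ) (hl : Injective l)
    {l₀ : D} (hl₀ : ∀ i, l i ≠ l₀) (hS : l₀ ∈ S) :
    ptilde S M K part pz q pS l x
      = ∫⁻ t, ptilde S M K part pz q pS (Fin.snoc l l₀) (Fin.snoc x t) := by
  have : IsProbabilityMeasure (refFactor S (Fin.snoc l l₀) ⟨l₀, hS⟩) := by
    rw [refFactor_snoc_self]; infer_instance
  have hm : Measurable fun v => bagDensity S part pz q pS l (assemble l x (extendS S v)) :=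
    (measurable_bagDensity hqm hpSm l).comp (measurable_assemble_extendS S l x)
  rw [ptilde_eq_lintegral_bagDensity, ← update_refFactor_snoc hS hl₀,
    lintegral_pi_update _ _ _ hm]
  refine lintegral_congr fun t => ?_
  rw [ptilde_eq_lintegral_bagDensity, bagDensity_snoc_of_mem l hS]
  refine lintegral_congr fun v => ?_
  rw [assemble_snoc hl hl₀, extendS_update, assemble_update hl₀]

theorem ptilde_marginalization_of_notMem [DecidableEq D] (hqm : ∀ u h, Measurable (q u h))
    (hpSm : ∀ z, Measurable (pS z))
    (hqdep : ∀ u h (w w' : D → ℝ), w u = w' u → (∀ s ∈ S, w s = w' s) → q u h w = q u h w')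
    (hpSdep : ∀ z (w w' : D → ℝ), (∀ s ∈ S, w s = w' s) → pS z w = pS z w')
    (hqproper : ∀ u h (w : D → ℝ), u ∉ S → (∫⁻ t : ℝ, q u h (update w u t)) = 1)
    {l : Fin n → D} (x : Fin n → ℝ) (hl : Injective l)
    {l₀ : D} (hl₀ : ∀ i, l i ≠ l₀) (hS : l₀ ∉ S) :
    ptilde S M K part pz q pS l x
      = ∫⁻ t, ptilde S M K part pz q pS (Fin.snoc l l₀) (Fin.snoc x t) := by
  set W := fun v : S → ℝ => assemble l x (extendS S v)
  have hm : Measurable fun p : (S → ℝ) × ℝ =>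
      bagDensity S part pz q pS (Fin.snoc l l₀) (update (W p.1) l₀ p.2) :=
    (measurable_bagDensity hqm hpSm _).comp (measurable_update'.comp
      (((measurable_assemble_extendS S l x).comp measurable_fst).prodMk measurable_snd))
  calc ptilde S M K part pz q pS l x
      = ∫⁻ v, (∫⁻ t, bagDensity S part pz q pS (Fin.snoc l l₀) (update (W v) l₀ t))
          ∂Measure.pi (refFactor S l) := by
        simp_rw [lintegral_bagDensity_snoc_update hqm hpSm hqdep hpSdep hqproper hS hl₀]
        rfl
    _ = ∫⁻ t, ∫⁻ v, bagDensity S part pz q pS (Fin.snoc l l₀) (update (W v) l₀ t)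
          ∂Measure.pi (refFactor S l) :=
        lintegral_lintegral_swap hm.aemeasurable
    _ = ∫⁻ t, ptilde S M K part pz q pS (Fin.snoc l l₀) (Fin.snoc x t) := by
        simp_rw [ptilde_eq_lintegral_bagDensity, refFactor_snoc_of_notMem l hS,
          assemble_snoc hl hl₀, W]

end BAG

/-- Kolmogorov consistency under marginalization: for a new location `l₀` not among the tuple
`l` (whether `l₀ ∈ S` or `l₀ ∉ S`), integrating the BAG finite-dimensional density of
`L ∪ {l₀}` over the value at `l₀` recovers the density of `L`:
`p̃(w_L) = ∫ p̃(w_{L ∪ {l₀}}) dw(l₀)`. -/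
theorem ptilde_marginalization {D : Type*} [DecidableEq D] (S : Finset D) (M K : ℕ)
    (part : D → Fin M)
    (pz : (Fin M → Fin K) → ℝ≥0∞)
    (q : D → Fin K → (D → ℝ) → ℝ≥0∞)
    (pS : (Fin M → Fin K) → (D → ℝ) → ℝ≥0∞)
    (hqm : ∀ u h, Measurable (q u h))
    (hpSm : ∀ z, Measurable (pS z))
    (hqdep : ∀ u h (w w' : D → ℝ), w u = w' u → (∀ s ∈ S, w s = w' s) → q u h w = q u h w')
    (hpSdep : ∀ z (w w' : D → ℝ), (∀ s ∈ S, w s = w' s) → pS z w = pS z w')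
    (hqproper : ∀ u h (w : D → ℝ), u ∉ S → (∫⁻ t : ℝ, q u h (Function.update w u t)) = 1)
    {n : ℕ} (l : Fin n → D) (x : Fin n → ℝ) (hl : Function.Injective l)
    (l₀ : D) (hl₀ : ∀ i, l i ≠ l₀) :
    ptilde S M K part pz q pS l x
      = ∫⁻ t : ℝ, ptilde S M K part pz q pS (Fin.snoc l l₀) (Fin.snoc x t) := by
  by_cases hS : l₀ ∈ S
  · exact ptilde_marginalization_of_mem hqm hpSm x hl hl₀ hS
  · exact ptilde_marginalization_of_notMem hqm hpSm hqdep hpSdep hqproper x hl hl₀ hS
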